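/- If X is a φ-prime submodule of M such that φ(X) ⊆ X(X:_R M)^2, then X is φ_ω-prime; that is, for every submodule Y of M and every ideal I of R, YI ⊆ X and YI ⊄ ∩_{n=1}^{∞} X(X:_R M)^n imply Y ⊆ X or I ⊆ (X:_R M). -/

import Mathlib

open MulOpposite Submodule

variable {R : Type*} [Ring R] {M : Type*} [AddCommGroup M] [Module Rᵐᵒᵖ M]

/-- The product `Y·A` of a set of elements of a right `R`-module `M` and a set of ring
elements: the submodule of all finite sums `Σ yᵢ·aᵢ` with `yᵢ ∈ Y`, `aᵢ ∈ A`. -/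
def sProd (Y : Set M) (A : Set R) : Submodule Rᵐᵒᵖ M :=
  Submodule.span Rᵐᵒᵖ {z | ∃ y ∈ Y, ∃ a ∈ A, z = op a • y}

/-- `(X :_R N) = {r : R | N·r ⊆ X}`. -/
def colR (X : Set M) (N : Set M) : Set R := {r | ∀ m ∈ N, op r • m ∈ X}

/-- `(X :_M A) = {m : M | m·A ⊆ X}`. -/
def colM (X : Set M) (A : Set R) : Set M := {m | ∀ r ∈ A, op r • m ∈ X}

/-- A function `φ : S(M) → S(M) ∪ {∅}` (values are either `∅` or submodules) with
`φ(X) ⊆ X` for every submodule `X`. -/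
def GoodPhi (φ : Submodule Rᵐᵒᵖ M → Set M) : Prop :=
  ∀ N : Submodule Rᵐᵒᵖ M, φ N ⊆ N ∧
    (φ N = (∅ : Set M) ∨ ∃ P : Submodule Rᵐᵒᵖ M, φ N = (P : Set M))

/-- `X` is a φ-prime submodule of the right `R`-module `M`. -/
def PhiPrime (φ : Submodule Rᵐᵒᵖ M → Set M) (X : Submodule Rᵐᵒᵖ M) : Prop :=
  X ≠ ⊤ ∧ ∀ (Y : Submodule Rᵐᵒᵖ M) (I : TwoSidedIdeal R),
    (sProd (Y : Set M) (I : Set R) : Set M) ⊆ (X : Set M) →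
    ¬((sProd (Y : Set M) (I : Set R) : Set M) ⊆ φ X) →
    (Y : Set M) ⊆ (X : Set M) ∨ (I : Set R) ⊆ colR (X : Set M) Set.univ

/-- `X` is a prime submodule of the right `R`-module `M`. -/
def PrimeSub (X : Submodule Rᵐᵒᵖ M) : Prop :=
  X ≠ ⊤ ∧ ∀ (Y : Submodule Rᵐᵒᵖ M) (I : TwoSidedIdeal R),
    (sProd (Y : Set M) (I : Set R) : Set M) ⊆ (X : Set M) →
    (Y : Set M) ⊆ (X : Set M) ∨ (I : Set R) ⊆ colR (X : Set M) Set.univ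

/-- `X` is a weakly prime submodule of the right `R`-module `M`. -/
def WeaklyPrime (X : Submodule Rᵐᵒᵖ M) : Prop :=
  X ≠ ⊤ ∧ ∀ (Y : Submodule Rᵐᵒᵖ M) (I : TwoSidedIdeal R),
    sProd (Y : Set M) (I : Set R) ≠ ⊥ →
    (sProd (Y : Set M) (I : Set R) : Set M) ⊆ (X : Set M) →
    (Y : Set M) ⊆ (X : Set M) ∨ (I : Set R) ⊆ colR (X : Set M) Set.univ

/-- `X` is an almost prime submodule of the right `R`-module `M`. -/
def AlmostPrime (X : Submodule Rᵐᵒᵖ M) : Prop :=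
  X ≠ ⊤ ∧ ∀ (Y : Submodule Rᵐᵒᵖ M) (I : TwoSidedIdeal R),
    (sProd (Y : Set M) (I : Set R) : Set M) ⊆ (X : Set M) →
    ¬((sProd (Y : Set M) (I : Set R) : Set M) ⊆
        (sProd (X : Set M) ((colR (X : Set M) Set.univ : Set R)) : Set M)) →
    (Y : Set M) ⊆ (X : Set M) ∨ (I : Set R) ⊆ colR (X : Set M) Set.univ

/-- `powAct X n = X (X :_R M)ⁿ`. -/
def powAct (X : Submodule Rᵐᵒᵖ M) : ℕ → Submodule Rᵐᵒᵖ M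
  | 0 => X
  | n + 1 => sProd (powAct X n : Set M) ((colR (X : Set M) Set.univ : Set R))

/-- The product of two sets of ring elements: all finite sums `Σ aᵢbᵢ`, `aᵢ ∈ A`, `bᵢ ∈ B`. -/
def idMul (A B : Set R) : Set R :=
  (AddSubmonoid.closure {x | ∃ a ∈ A, ∃ b ∈ B, x = a * b} : AddSubmonoid R)

/-- A prime (two-sided) ideal of a possibly noncommutative ring. -/
def TIPrime (P : TwoSidedIdeal R) : Prop :=
  (P : Set R) ≠ Set.univ ∧ ∀ I J : TwoSidedIdeal R,
    idMul (I : Set R) (J : Set R) ⊆ (P : Set R) →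
    (I : Set R) ⊆ (P : Set R) ∨ (J : Set R) ⊆ (P : Set R)

/-- The radical `√A`: the intersection of all prime two-sided ideals containing `A`. -/
def radSet (A : Set R) : Set R :=
  {x | ∀ P : TwoSidedIdeal R, TIPrime P → A ⊆ (P : Set R) → x ∈ (P : Set R)}

/-- A ψ-prime two-sided ideal of a possibly noncommutative ring. -/
def PsiPrime (ψ : TwoSidedIdeal R → Set R) (A : TwoSidedIdeal R) : Prop :=
  (A : Set R) ≠ Set.univ ∧ ∀ I J : TwoSidedIdeal R,
    idMul (I : Set R) (J : Set R) ⊆ (A : Set R) →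
    ¬(idMul (I : Set R) (J : Set R) ⊆ ψ A) →
    (I : Set R) ⊆ (A : Set R) ∨ (J : Set R) ⊆ (A : Set R)

/-- The induced function `φ_Y` on submodules of `M/Y`: `φ_Y(X/Y) = (φ(X)+Y)/Y`. -/
def phiQuot (φ : Submodule Rᵐᵒᵖ M → Set M) (Y : Submodule Rᵐᵒᵖ M) :
    Submodule Rᵐᵒᵖ (M ⧸ Y) → Set (M ⧸ Y) :=
  fun Q => Y.mkQ '' (φ (Q.comap Y.mkQ))

/-- The colon `(X :_R Y)` of two submodules, as a two-sided ideal of `R`. -/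
def colTI (X Y : Submodule Rᵐᵒᵖ M) : TwoSidedIdeal R :=
  TwoSidedIdeal.mk' (colR (X : Set M) (Y : Set M))
    (by intro m hm; simp)
    (by intro x y hx hy m hm
        rw [op_add, add_smul]
        exact X.add_mem (hx m hm) (hy m hm))
    (by intro x hx m hm
        rw [op_neg, neg_smul]
        exact X.neg_mem (hx m hm))
    (by intro x y hy m hm
        rw [op_mul, mul_smul]
        exact hy _ (Y.smul_mem (op x) hm))
    (by intro x y hx m hm
        rw [op_mul, mul_smul]
        exact X.smul_mem (op y) (hx m hm))

/-- The colon `(X :_M I)` as a submodule of `M`, for a two-sided ideal `I`. -/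
def colMS (X : Submodule Rᵐᵒᵖ M) (I : TwoSidedIdeal R) : Submodule Rᵐᵒᵖ M where
  carrier := colM (X : Set M) (I : Set R)
  add_mem' := by
    intro a b ha hb r hr
    rw [smul_add]
    exact X.add_mem (ha r hr) (hb r hr)
  zero_mem' := by
    intro r hr
    rw [smul_zero]
    exact X.zero_mem
  smul_mem' := by
    intro c m hm r hr
    rw [← mul_smul, show op r * c = op (unop c * r) from by rw [op_mul, op_unop]]
    exact hm _ (I.mul_mem_left _ _ hr)

/-- `M` is a multiplication right `R`-module: every submodule `X` equals `M(X :_R M)`. -/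
def IsMultiplication (R : Type*) [Ring R] (M : Type*) [AddCommGroup M]
    [Module Rᵐᵒᵖ M] : Prop :=
  ∀ X : Submodule Rᵐᵒᵖ M, X = sProd (Set.univ : Set M) ((colR (X : Set M) Set.univ : Set R))

/-- The product `XY = M(X :_R M)(Y :_R M)` of two submodules of a multiplication module. -/
def mprod (X Y : Submodule Rᵐᵒᵖ M) : Submodule Rᵐᵒᵖ M :=
  sProd ((sProd (Set.univ : Set M) ((colR (X : Set M) Set.univ : Set R)) : Submodule Rᵐᵒᵖ M) : Set M)
    ((colR (Y : Set M) Set.univ : Set R))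

/-- A φ-m-system in a right `R`-module `M`. -/
def PhiMSystem (φ : Submodule Rᵐᵒᵖ M → Set M) (S : Set M) : Prop :=
  S.Nonempty ∧ ∀ (Y₁ Y₂ : Submodule Rᵐᵒᵖ M) (I : TwoSidedIdeal R),
    ((Y₁ ⊔ Y₂ : Submodule Rᵐᵒᵖ M) : Set M) ∩ S ≠ ∅ →
    ((Y₁ ⊔ sProd (Set.univ : Set M) (I : Set R) : Submodule Rᵐᵒᵖ M) : Set M) ∩ S ≠ ∅ →
    ¬((sProd (Y₂ : Set M) (I : Set R) : Set M) ⊆ φ (Submodule.span Rᵐᵒᵖ Sᶜ)) →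
    ((Y₁ ⊔ sProd (Y₂ : Set M) (I : Set R) : Submodule Rᵐᵒᵖ M) : Set M) ∩ S ≠ ∅

/-!
If `Y ⊄ X` and `I ⊄ (X :_R M)` while `YI ⊆ X`, φ-primality puts `YI` inside `φ(X)`. The same
applies to the enlarged pair `X + Y` and `I + (X :_R M)`, whose product still lies in `X` but now
contains `X(X :_R M)`. Hence `X(X :_R M) ⊆ φ(X) ⊆ X(X :_R M)²`, so the descending chain
`X(X :_R M)ⁿ` is constant from `n = 1` on, and `YI ⊆ X(X :_R M)²` lies in all of its terms.
-/

lemma sProd_le_iff {Y : Set M} {A : Set R} {X : Submodule Rᵐᵒᵖ M} :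
    sProd Y A ≤ X ↔ ∀ y ∈ Y, ∀ a ∈ A, op a • y ∈ X := by
  rw [sProd, Submodule.span_le]
  refine ⟨fun h y hy a ha => h ⟨y, hy, a, ha, rfl⟩, ?_⟩
  rintro h _ ⟨y, hy, a, ha, rfl⟩
  exact h y hy a ha

lemma sProd_mono {A B : Set M} {C D : Set R} (hAB : A ⊆ B) (hCD : C ⊆ D) :
    sProd A C ≤ sProd B D :=
  sProd_le_iff.2 fun y hy a ha => Submodule.subset_span ⟨y, hAB hy, a, hCD ha, rfl⟩

lemma sProd_le_self (A : Submodule Rᵐᵒᵖ M) (B : Set R) : sProd (A : Set M) B ≤ A :=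
  sProd_le_iff.2 fun _ hy _ _ => A.smul_mem _ hy

lemma coe_colTI_top (X : Submodule Rᵐᵒᵖ M) :
    (colTI X ⊤ : Set R) = colR (X : Set M) Set.univ :=
  TwoSidedIdeal.coe_mk' _ _ _ _ _ _

lemma sProd_sup_sup_colTI_le {X Y : Submodule Rᵐᵒᵖ M} {I : TwoSidedIdeal R}
    (hYI : sProd (Y : Set M) (I : Set R) ≤ X) :
    sProd ((X ⊔ Y : Submodule Rᵐᵒᵖ M) : Set M) ((I ⊔ colTI X ⊤ : TwoSidedIdeal R) : Set R) ≤
      X := by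
  refine sProd_le_iff.2 fun _ hxy _ hij => ?_
  obtain ⟨x, hx, y, hy, rfl⟩ := Submodule.mem_sup.1 hxy
  obtain ⟨i, hi, j, hj, rfl⟩ := TwoSidedIdeal.mem_sup.1 hij
  have hj' : j ∈ colR (X : Set M) Set.univ := coe_colTI_top X ▸ hj
  rw [op_add, add_smul, smul_add]
  have hyi : op i • y ∈ X := sProd_le_iff.1 hYI y hy i hi
  exact X.add_mem (X.add_mem (X.smul_mem _ hx) hyi) (hj' _ trivial)

lemma PhiPrime.sProd_subset_phi {φ : Submodule Rᵐᵒᵖ M → Set M} {X Y : Submodule Rᵐᵒᵖ M}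
    {I : TwoSidedIdeal R} (hX : PhiPrime φ X)
    (hYI : (sProd (Y : Set M) (I : Set R) : Set M) ⊆ X) (hY : ¬(Y : Set M) ⊆ X)
    (hI : ¬(I : Set R) ⊆ colR (X : Set M) Set.univ) :
    (sProd (Y : Set M) (I : Set R) : Set M) ⊆ φ X := by
  by_contra hφ
  exact (hX.2 Y I hYI hφ).elim hY hI

lemma powAct_succ_le (X : Submodule Rᵐᵒᵖ M) (n : ℕ) : powAct X (n + 1) ≤ powAct X n :=
  sProd_le_self _ _

lemma powAct_one_le_of_le_two {X : Submodule Rᵐᵒᵖ M} (h : powAct X 1 ≤ powAct X 2) (n : ℕ) :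
    powAct X 1 ≤ powAct X (n + 1) := by
  induction n with
  | zero => exact le_rfl
  | succ n ih => exact h.trans (sProd_mono ih subset_rfl)

theorem stmt_4_general (φ : Submodule Rᵐᵒᵖ M → Set M)
    (X : Submodule Rᵐᵒᵖ M) (h1 : PhiPrime φ X)
    (h2 : φ X ⊆ (powAct X 2 : Set M)) :
    ∀ (Y : Submodule Rᵐᵒᵖ M) (I : TwoSidedIdeal R),
      (sProd (Y : Set M) (I : Set R) : Set M) ⊆ (X : Set M) →
      ¬((sProd (Y : Set M) (I : Set R) : Set M) ⊆ ⋂ n : ℕ, (powAct X (n + 1) : Set M)) →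
      (Y : Set M) ⊆ (X : Set M) ∨ (I : Set R) ⊆ (colR (X : Set M) Set.univ : Set R) := by
  intro Y I hYI hYI_omega
  by_contra! hcon
  obtain ⟨hY, hI⟩ := hcon
  have hYIφ := h1.sProd_subset_phi hYI hY hI
  have hφ_enlarged := h1.sProd_subset_phi (sProd_sup_sup_colTI_le hYI)
    (fun h => hY (subset_trans (SetLike.coe_subset_coe.2 le_sup_right) h))
    (fun h => hI (subset_trans (SetLike.coe_subset_coe.2 le_sup_left) h))
  have hstable : powAct X 1 ≤ powAct X 2 := by
    refine (sProd_mono (SetLike.coe_subset_coe.2 le_sup_left) ?_).trans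
      (hφ_enlarged.trans h2)
    exact (coe_colTI_top X).symm.subset.trans (SetLike.coe_subset_coe.2 le_sup_right)
  refine hYI_omega (Set.subset_iInter fun n => ?_)
  calc (sProd (Y : Set M) (I : Set R) : Set M)
      ⊆ powAct X 2 := hYIφ.trans h2
    _ ⊆ powAct X 1 := powAct_succ_le X 1
    _ ⊆ powAct X (n + 1) := powAct_one_le_of_le_two hstable n

/-- If `X` is a φ-prime submodule of `M` such that
`φ(X) ⊆ X(X :_R M)²`, then `X` is `φ_ω`-prime: for every submodule `Y` and ideal `I`,
`YI ⊆ X` and `YI ⊄ ⋂ₙ X(X :_R M)ⁿ` imply `Y ⊆ X` or `I ⊆ (X :_R M)`. -/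
theorem stmt_4 (φ : Submodule Rᵐᵒᵖ M → Set M) (hφ : GoodPhi φ)
    (X : Submodule Rᵐᵒᵖ M) (h1 : PhiPrime φ X)
    (h2 : φ X ⊆ (powAct X 2 : Set M)) :
    ∀ (Y : Submodule Rᵐᵒᵖ M) (I : TwoSidedIdeal R),
      (sProd (Y : Set M) (I : Set R) : Set M) ⊆ (X : Set M) →
      ¬((sProd (Y : Set M) (I : Set R) : Set M) ⊆ ⋂ n : ℕ, (powAct X (n + 1) : Set M)) →
      (Y : Set M) ⊆ (X : Set M) ∨ (I : Set R) ⊆ (colR (X : Set M) Set.univ : Set R) :=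
  stmt_4_general φ X h1 h2
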